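/- Suppose the first-stage channel w₁ attains the optimal value V₁ of Problem 1'. Then the optimal value of Problem 2' equals V₁, and it is attained by the copy channel w(r̂|z,x) = 1 if r̂ = z and 0 otherwise (the copy channel is feasible because I(R̂₂;X) = I(R̂₂,Z;X) = I(Z;X) ≤ ε ≤ δ, and it achieves I(R̂₂;R) = I(Z;R)). Moreover, for every first-stage channel w₁ feasible for Problem 1', the optimal value of Problem 2' is at most V₁. -/
import Mathlib


open Real Finset

noncomputable section

variable {𝒳 ℛ ℛh : Type} [Fintype 𝒳] [Fintype ℛ] [Fintype ℛh] [DecidableEq ℛh]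

/-- Marginal `p(x)` of the joint pmf `p(x,r)`. -/
def pX (p : 𝒳 → ℛ → ℝ) (x : 𝒳) : ℝ := ∑ r, p x r

/-- Marginal `p(r)`. -/
def pR (p : 𝒳 → ℛ → ℝ) (r : ℛ) : ℝ := ∑ x, p x r

/-- `p` is a pmf on `𝒳 × ℛ`. -/
def IsPMF (p : 𝒳 → ℛ → ℝ) : Prop := (∀ x r, 0 ≤ p x r) ∧ ∑ x, ∑ r, p x r = 1

/-- A first-stage channel `w₁(r̂|x)`. -/
def IsChannel1 (w₁ : ℛh → 𝒳 → ℝ) : Prop :=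
  (∀ rh x, 0 ≤ w₁ rh x ∧ w₁ rh x ≤ 1) ∧ ∀ x, ∑ rh, w₁ rh x = 1

/-- A second-stage channel `w(r̂|z,x)` with `z` ranging over `ℛ̂`. -/
def IsChannel2 (w : ℛh → ℛh → 𝒳 → ℝ) : Prop :=
  (∀ rh z x, 0 ≤ w rh z x ∧ w rh z x ≤ 1) ∧ ∀ z x, ∑ rh, w rh z x = 1

/-- Mutual information `I(R̂₁;X)` under the joint pmf `w₁(r̂|x) p(x,r)`
(base-2 logs, convention `0·log₂0 = 0`). -/
def I1X (p : 𝒳 → ℛ → ℝ) (w₁ : ℛh → 𝒳 → ℝ) : ℝ :=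
  ∑ rh, ∑ x, w₁ rh x * pX p x *
    logb 2 (w₁ rh x * pX p x / ((∑ x', w₁ rh x' * pX p x') * pX p x))

/-- Mutual information `I(R̂₁;R)` under the joint pmf `w₁(r̂|x) p(x,r)`. -/
def I1R (p : 𝒳 → ℛ → ℝ) (w₁ : ℛh → 𝒳 → ℝ) : ℝ :=
  ∑ rh, ∑ r, (∑ x, w₁ rh x * p x r) *
    logb 2 ((∑ x, w₁ rh x * p x r) / ((∑ x, w₁ rh x * pX p x) * pR p r))

/-- Feasibility for Problem 1': `w₁` a channel with `I(R̂₁;X) ≤ ε`. -/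
def Feas1 (p : 𝒳 → ℛ → ℝ) (ε : ℝ) (w₁ : ℛh → 𝒳 → ℝ) : Prop :=
  IsChannel1 w₁ ∧ I1X p w₁ ≤ ε

/-- Second-stage induced joint `q(r̂,z,x) = w(r̂|z,x) w₁(z|x) p(x)`. -/
def q2J (p : 𝒳 → ℛ → ℝ) (w₁ : ℛh → 𝒳 → ℝ) (w : ℛh → ℛh → 𝒳 → ℝ)
    (rh z : ℛh) (x : 𝒳) : ℝ :=
  w rh z x * w₁ z x * pX p x

/-- Mutual information `I(R̂₂;X)` of the second stage. -/
def I2RhX (p : 𝒳 → ℛ → ℝ) (w₁ : ℛh → 𝒳 → ℝ) (w : ℛh → ℛh → 𝒳 → ℝ) : ℝ :=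
  ∑ rh, ∑ x, (∑ z, q2J p w₁ w rh z x) *
    logb 2 ((∑ z, q2J p w₁ w rh z x) /
      ((∑ z, ∑ x', q2J p w₁ w rh z x') * pX p x))

/-- Mutual information `I(R̂₂,Z;X)` of the second stage. -/
def I2RhZX (p : 𝒳 → ℛ → ℝ) (w₁ : ℛh → 𝒳 → ℝ) (w : ℛh → ℛh → 𝒳 → ℝ) : ℝ :=
  ∑ rh, ∑ z, ∑ x, q2J p w₁ w rh z x *
    logb 2 (q2J p w₁ w rh z x / ((∑ x', q2J p w₁ w rh z x') * pX p x))

/-- Mutual information `I(R̂₂;R)` of the second stage, under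
`q(r̂,z,x,r) = w(r̂|z,x) w₁(z|x) p(x,r)`. -/
def I2RhR (p : 𝒳 → ℛ → ℝ) (w₁ : ℛh → 𝒳 → ℝ) (w : ℛh → ℛh → 𝒳 → ℝ) : ℝ :=
  ∑ rh, ∑ r, (∑ z, ∑ x, w rh z x * w₁ z x * p x r) *
    logb 2 ((∑ z, ∑ x, w rh z x * w₁ z x * p x r) /
      ((∑ z, ∑ x, q2J p w₁ w rh z x) * pR p r))

/-- Feasibility for Problem 2': `w` a channel with `I(R̂₂;X) ≤ ε` and `I(R̂₂,Z;X) ≤ δ`. -/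
def Feas2 (p : 𝒳 → ℛ → ℝ) (ε δ : ℝ) (w₁ : ℛh → 𝒳 → ℝ) (w : ℛh → ℛh → 𝒳 → ℝ) : Prop :=
  IsChannel2 w ∧ I2RhX p w₁ w ≤ ε ∧ I2RhZX p w₁ w ≤ δ

/-- The copy channel `w(r̂|z,x) = 1` if `r̂ = z`, else `0`. -/
def copyCh : ℛh → ℛh → 𝒳 → ℝ := fun rh z _ => if rh = z then 1 else 0

/-- The composition of a second-stage channel with a first-stage channel. -/
def compCh (w : ℛh → ℛh → 𝒳 → ℝ) (w₁ : ℛh → 𝒳 → ℝ) (rh : ℛh) (x : 𝒳) : ℝ :=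
  ∑ z, w rh z x * w₁ z x

lemma sumz_q2J (p : 𝒳 → ℛ → ℝ) (w₁ : ℛh → 𝒳 → ℝ) (w : ℛh → ℛh → 𝒳 → ℝ)
    (rh : ℛh) (x : 𝒳) :
    ∑ z, q2J p w₁ w rh z x = compCh w w₁ rh x * pX p x := by
  simp [q2J, compCh, Finset.sum_mul]

lemma sumzx_q2J (p : 𝒳 → ℛ → ℝ) (w₁ : ℛh → 𝒳 → ℝ) (w : ℛh → ℛh → 𝒳 → ℝ)
    (rh : ℛh) :
    ∑ z, ∑ x, q2J p w₁ w rh z x = ∑ x, compCh w w₁ rh x * pX p x := by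
  rw [Finset.sum_comm]
  exact Finset.sum_congr rfl fun x _ => sumz_q2J p w₁ w rh x

lemma sumzx_num (p : 𝒳 → ℛ → ℝ) (w₁ : ℛh → 𝒳 → ℝ) (w : ℛh → ℛh → 𝒳 → ℝ)
    (rh : ℛh) (r : ℛ) :
    ∑ z, ∑ x, w rh z x * w₁ z x * p x r = ∑ x, compCh w w₁ rh x * p x r := by
  rw [Finset.sum_comm]
  exact Finset.sum_congr rfl fun x _ => by simp [compCh, Finset.sum_mul]

lemma comp_I2RhX (p : 𝒳 → ℛ → ℝ) (w₁ : ℛh → 𝒳 → ℝ) (w : ℛh → ℛh → 𝒳 → ℝ) :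
    I2RhX p w₁ w = I1X p (compCh w w₁) := by
  unfold I2RhX I1X
  simp only [sumz_q2J, sumzx_q2J]

lemma comp_I2RhR (p : 𝒳 → ℛ → ℝ) (w₁ : ℛh → 𝒳 → ℝ) (w : ℛh → ℛh → 𝒳 → ℝ) :
    I2RhR p w₁ w = I1R p (compCh w w₁) := by
  unfold I2RhR I1R
  simp only [sumzx_num, sumzx_q2J]

lemma comp_isChannel1 {w₁ : ℛh → 𝒳 → ℝ} {w : ℛh → ℛh → 𝒳 → ℝ}
    (h₁ : IsChannel1 w₁) (h : IsChannel2 w) : IsChannel1 (compCh w w₁) := by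
  have hnn : ∀ rh x, 0 ≤ compCh w w₁ rh x := fun rh x =>
    Finset.sum_nonneg fun z _ => mul_nonneg (h.1 rh z x).1 (h₁.1 z x).1
  have hsum : ∀ x, ∑ rh, compCh w w₁ rh x = 1 := by
    intro x
    rw [show ∑ rh, compCh w w₁ rh x = ∑ z, ∑ rh, w rh z x * w₁ z x from
      Finset.sum_comm]
    calc ∑ z, ∑ rh, w rh z x * w₁ z x
        = ∑ z, (∑ rh, w rh z x) * w₁ z x := by
          exact Finset.sum_congr rfl fun z _ => (Finset.sum_mul _ _ _).symm
      _ = ∑ z, w₁ z x := by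
          exact Finset.sum_congr rfl fun z _ => by rw [h.2 z x, one_mul]
      _ = 1 := h₁.2 x
  refine ⟨fun rh x => ⟨hnn rh x, ?_⟩, hsum⟩
  calc compCh w w₁ rh x ≤ ∑ rh', compCh w w₁ rh' x :=
        Finset.single_le_sum (fun rh' _ => hnn rh' x) (Finset.mem_univ rh)
    _ = 1 := hsum x

lemma copy_sumz (p : 𝒳 → ℛ → ℝ) (w₁ : ℛh → 𝒳 → ℝ) (rh : ℛh) (x : 𝒳) :
    ∑ z, q2J p w₁ (copyCh : ℛh → ℛh → 𝒳 → ℝ) rh z x = w₁ rh x * pX p x := by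
  simp [q2J, copyCh, ite_mul, Finset.sum_ite_eq]

lemma copy_sumzx (p : 𝒳 → ℛ → ℝ) (w₁ : ℛh → 𝒳 → ℝ) (rh : ℛh) :
    ∑ z, ∑ x, q2J p w₁ (copyCh : ℛh → ℛh → 𝒳 → ℝ) rh z x
      = ∑ x, w₁ rh x * pX p x := by
  rw [Finset.sum_comm]
  exact Finset.sum_congr rfl fun x _ => copy_sumz p w₁ rh x

lemma copy_I2RhX (p : 𝒳 → ℛ → ℝ) (w₁ : ℛh → 𝒳 → ℝ) :
    I2RhX p w₁ (copyCh : ℛh → ℛh → 𝒳 → ℝ) = I1X p w₁ := by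
  unfold I2RhX I1X
  simp only [copy_sumz, copy_sumzx]

lemma copy_I2RhZX (p : 𝒳 → ℛ → ℝ) (w₁ : ℛh → 𝒳 → ℝ) :
    I2RhZX p w₁ (copyCh : ℛh → ℛh → 𝒳 → ℝ) = I1X p w₁ := by
  unfold I2RhZX I1X
  refine Finset.sum_congr rfl fun rh _ => ?_
  rw [Finset.sum_eq_single rh (fun z _ hz => ?_) (fun h => absurd (Finset.mem_univ rh) h)]
  · refine Finset.sum_congr rfl fun x _ => ?_
    simp [q2J, copyCh]
  · refine Finset.sum_eq_zero fun x _ => ?_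
    have : q2J p w₁ (copyCh : ℛh → ℛh → 𝒳 → ℝ) rh z x = 0 := by
      simp [q2J, copyCh, Ne.symm hz]
    rw [this, zero_mul]

lemma copy_I2RhR (p : 𝒳 → ℛ → ℝ) (w₁ : ℛh → 𝒳 → ℝ) :
    I2RhR p w₁ (copyCh : ℛh → ℛh → 𝒳 → ℝ) = I1R p w₁ := by
  unfold I2RhR I1R
  have hnum : ∀ (rh : ℛh) (r : ℛ),
      ∑ z, ∑ x, (copyCh : ℛh → ℛh → 𝒳 → ℝ) rh z x * w₁ z x * p x r
        = ∑ x, w₁ rh x * p x r := by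
    intro rh r
    rw [Finset.sum_comm]
    refine Finset.sum_congr rfl fun x _ => ?_
    simp [copyCh, ite_mul, Finset.sum_ite_eq]
  simp only [hnum, copy_sumzx]

/-- Suppose the first-stage channel `w₁` attains the optimal value
`V₁` of Problem 1' (maximising `I(R̂₁;R)` s.t. `I(R̂₁;X) ≤ ε`).  Then the optimal value
of Problem 2' equals `V₁`, attained by the copy channel, which is feasible because
`I(R̂₂;X) = I(R̂₂,Z;X) = I(Z;X) ≤ ε ≤ δ` and achieves `I(R̂₂;R) = I(Z;R)`.  Moreover,
for every first-stage channel `w₁'` feasible for Problem 1', the optimal value of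
Problem 2' is at most `V₁`. -/
theorem statement10
    (p : 𝒳 → ℛ → ℝ) (hp : IsPMF p)
    (ε δ : ℝ) (hε : 0 ≤ ε) (hεδ : ε ≤ δ)
    (w₁ : ℛh → 𝒳 → ℝ) (V₁ : ℝ)
    (hfeas : Feas1 p ε w₁)
    (hval : I1R p w₁ = V₁)
    (hopt : ∀ w₁' : ℛh → 𝒳 → ℝ, Feas1 p ε w₁' → I1R p w₁' ≤ V₁) :
    -- the copy channel is feasible, with I(R̂₂;X) = I(R̂₂,Z;X) = I(Z;X)
    (I2RhX p w₁ (copyCh : ℛh → ℛh → 𝒳 → ℝ) = I1X p w₁ ∧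
     I2RhZX p w₁ (copyCh : ℛh → ℛh → 𝒳 → ℝ) = I1X p w₁ ∧
     Feas2 p ε δ w₁ (copyCh : ℛh → ℛh → 𝒳 → ℝ)) ∧
    -- it achieves I(R̂₂;R) = I(Z;R), attaining the optimal value V₁ of Problem 2'
    I2RhR p w₁ (copyCh : ℛh → ℛh → 𝒳 → ℝ) = I1R p w₁ ∧
    I2RhR p w₁ (copyCh : ℛh → ℛh → 𝒳 → ℝ) = V₁ ∧
    (∀ w : ℛh → ℛh → 𝒳 → ℝ, Feas2 p ε δ w₁ w → I2RhR p w₁ w ≤ V₁) ∧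
    -- moreover, for every feasible first-stage channel the optimal value of
    -- Problem 2' is at most V₁
    (∀ w₁' : ℛh → 𝒳 → ℝ, Feas1 p ε w₁' →
      ∀ w : ℛh → ℛh → 𝒳 → ℝ, Feas2 p ε δ w₁' w → I2RhR p w₁' w ≤ V₁) := by
  have hcopyCh : IsChannel2 (copyCh : ℛh → ℛh → 𝒳 → ℝ) := by
    constructor
    · intro rh z x
      unfold copyCh
      split <;> norm_num
    · intro z x
      simp [copyCh]
  have hgen : ∀ w₁' : ℛh → 𝒳 → ℝ, Feas1 p ε w₁' →
      ∀ w : ℛh → ℛh → 𝒳 → ℝ, Feas2 p ε δ w₁' w → I2RhR p w₁' w ≤ V₁ := by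
    intro w₁' hf1 w hf2
    rw [comp_I2RhR]
    refine hopt _ ⟨comp_isChannel1 hf1.1 hf2.1, ?_⟩
    rw [← comp_I2RhX]
    exact hf2.2.1
  refine ⟨⟨copy_I2RhX p w₁, copy_I2RhZX p w₁, hcopyCh, ?_, ?_⟩,
    copy_I2RhR p w₁, by rw [copy_I2RhR p w₁, hval],
    fun w hw => hgen w₁ hfeas w hw, hgen⟩
  · rw [copy_I2RhX p w₁]; exact hfeas.2
  · rw [copy_I2RhZX p w₁]; exact le_trans hfeas.2 hεδ

end
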